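/- arXiv:2211.07232 — 2 statements merged into one kernel-verified Lean document; each statement's English description precedes it below -/
import Mathlib

section
/- Let S, A be symmetric positive definite real d×d matrices, b ∈ ℝ^d, f ≥ (1/2)bᵀS⁻¹b, and V(x) = (1/2)xᵀSx + bᵀx + f. Set c₁ = λ_min(S+A) and c₂ = tr S + tr A + ((2λ_max(S+A) − λ_min(S+A))²/(2λ_min(S+A)²) − 1)·‖b‖² + λ_min(S+A)·f. Then for all x ∈ ℝ^d: ΔV(x) + tr A − ‖∇V(x) + Ax‖² ≤ −c₁(V(x) + (1/2)xᵀAx) + c₂. -/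
open Matrix Finset

lemma coord_ineq (lmin lmax l y z : ℝ) (h0 : 0 < lmin) (h1 : lmin ≤ l) (h2 : l ≤ lmax) :
    0 ≤ l^2*y^2 - lmin/2*(l*y^2) - lmin*(z*y) + 2*(l*(z*y))
      + (2*lmax - lmin)^2/(2*lmin^2)*z^2 := by
  have hfact : lmin^2*(2*l - lmin) ≤ l*(2*lmax - lmin)^2 := by
    nlinarith [mul_nonneg (mul_nonneg h0.le (sub_nonneg.2 h1)) (sub_nonneg.2 (h1.trans h2)),
      mul_nonneg (sub_nonneg.2 h1) (sub_nonneg.2 h2),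
      mul_nonneg (mul_nonneg h0.le h0.le) (sub_nonneg.2 (h1.trans h2)),
      mul_nonneg (mul_nonneg (h0.trans_le h1).le h0.le) (sub_nonneg.2 h2),
      sq_nonneg (l - lmin), sq_nonneg (lmax - lmin), mul_pos h0 (h0.trans_le h1)]
  have hP : 0 ≤ (l^2*y^2 - lmin/2*(l*y^2) - lmin*(z*y) + 2*(l*(z*y))) * (2*lmin^2)
      + (2*lmax - lmin)^2*z^2 := by
    nlinarith [sq_nonneg (2*(l^2 - lmin*l/2)*y + (2*l - lmin)*z),
      mul_nonneg (mul_nonneg (by linarith : (0:ℝ) ≤ 2*l - lmin)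
        (sub_nonneg.2 hfact)) (sq_nonneg z),
      mul_pos (h0.trans_le h1) (by linarith : (0:ℝ) < 2*l - lmin), sq_nonneg z, sq_nonneg y]
  have h2l : (0:ℝ) < 2*lmin^2 := by positivity
  have : l^2*y^2 - lmin/2*(l*y^2) - lmin*(z*y) + 2*(l*(z*y)) + (2*lmax - lmin)^2/(2*lmin^2)*z^2
      = ((l^2*y^2 - lmin/2*(l*y^2) - lmin*(z*y) + 2*(l*(z*y))) * (2*lmin^2)
        + (2*lmax - lmin)^2*z^2) / (2*lmin^2) := by
    field_simp
  rw [this]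
  exact div_nonneg hP h2l.le

lemma quad_bound {d : ℕ} (M : Matrix (Fin d) (Fin d) ℝ) (hM : M.IsHermitian)
    (lmin lmax : ℝ) (h0 : 0 < lmin)
    (hlo : ∀ i, lmin ≤ hM.eigenvalues i) (hhi : ∀ i, hM.eigenvalues i ≤ lmax)
    (b x : Fin d → ℝ) :
    lmin * (1/2 * (x ⬝ᵥ M.mulVec x) + b ⬝ᵥ x)
      ≤ (M.mulVec x + b) ⬝ᵥ (M.mulVec x + b)
        + ((2*lmax - lmin)^2/(2*lmin^2) - 1) * (b ⬝ᵥ b) := by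
  set U : Matrix (Fin d) (Fin d) ℝ := (hM.eigenvectorUnitary : Matrix (Fin d) (Fin d) ℝ) with hUdef
  have hU1 : star U * U = 1 := Unitary.coe_star_mul_self hM.eigenvectorUnitary
  have hU2 : U * star U = 1 := Unitary.coe_mul_star_self hM.eigenvectorUnitary
  set ev := hM.eigenvalues with hev
  set y := star U *ᵥ x with hy
  set z := star U *ᵥ b with hz
  have hx : x = U *ᵥ y := by rw [hy, mulVec_mulVec, hU2, one_mulVec]
  have hb : b = U *ᵥ z := by rw [hz, mulVec_mulVec, hU2, one_mulVec]
  have hMx : M *ᵥ x = U *ᵥ (fun i => ev i * y i) := by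
    have h1 : M *ᵥ x = (U * diagonal ev) *ᵥ y := by
      conv_lhs => rw [hM.spectral_theorem, Unitary.conjStarAlgAut_apply]
      rw [← mulVec_mulVec, ← hy]
      congr 2
    have h2 : diagonal ev *ᵥ y = fun i => ev i * y i := by
      ext i; rw [mulVec_diagonal]
    rw [h1, ← mulVec_mulVec, h2]
  have orth : ∀ v w : Fin d → ℝ, (U *ᵥ v) ⬝ᵥ (U *ᵥ w) = v ⬝ᵥ w := by
    intro v w
    have hst : Uᵀ = star U := by ext i j; simp [Matrix.star_apply]
    rw [dotProduct_mulVec, vecMul_mulVec, hst, hU1, vecMul_one]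
  have e1 : x ⬝ᵥ M *ᵥ x = y ⬝ᵥ (fun i => ev i * y i) := by
    rw [hMx]; nth_rewrite 1 [hx]; rw [orth]
  have e2 : b ⬝ᵥ x = z ⬝ᵥ y := by
    nth_rewrite 1 [hb]; nth_rewrite 1 [hx]; rw [orth]
  have e3 : (M *ᵥ x + b) ⬝ᵥ (M *ᵥ x + b)
      = (fun i => ev i * y i + z i) ⬝ᵥ (fun i => ev i * y i + z i) := by
    rw [hMx, hb, ← mulVec_add, orth]; rfl
  have e4 : b ⬝ᵥ b = z ⬝ᵥ z := by
    nth_rewrite 1 [hb]; nth_rewrite 1 [hb]; rw [orth]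
  rw [e1, e2, e3, e4, ← sub_nonneg]
  have hsum : 0 ≤ ∑ i, ((ev i * y i + z i) * (ev i * y i + z i)
      + ((2*lmax - lmin)^2/(2*lmin^2) - 1) * (z i * z i)
      - lmin * (1/2 * (y i * (ev i * y i)) + z i * y i)) := by
    apply Finset.sum_nonneg
    intro i _
    nlinarith [coord_ineq lmin lmax (ev i) (y i) (z i) h0 (hlo i) (hhi i)]
  refine le_of_le_of_eq hsum ?_
  simp only [dotProduct, Finset.sum_sub_distrib, Finset.sum_add_distrib, ← Finset.mul_sum]

/-- Assumption (A2) for quadratic potentials (Example 1): with `∇V(x) = Sx + b`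
and `ΔV(x) = tr S`, and `lmin`, `lmax` the minimal and maximal eigenvalues of `S + A`. -/
theorem quad_potential_A2 (d : ℕ) (S A : Matrix (Fin d) (Fin d) ℝ)
    (hS : S.PosDef) (hA : A.PosDef) (b : Fin d → ℝ) (f : ℝ)
    (hf : f ≥ 1 / 2 * (b ⬝ᵥ S⁻¹.mulVec b))
    (V : (Fin d → ℝ) → ℝ)
    (hV : ∀ x, V x = 1 / 2 * (x ⬝ᵥ S.mulVec x) + b ⬝ᵥ x + f)
    (hSA : (S + A).IsHermitian) (lmin lmax : ℝ)
    (hlmin : IsLeast (Set.range hSA.eigenvalues) lmin)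
    (hlmax : IsGreatest (Set.range hSA.eigenvalues) lmax)
    (c₁ c₂ : ℝ) (hc₁ : c₁ = lmin)
    (hc₂ : c₂ = S.trace + A.trace
      + ((2 * lmax - lmin) ^ 2 / (2 * lmin ^ 2) - 1) * (b ⬝ᵥ b) + lmin * f) :
    ∀ x : Fin d → ℝ,
      S.trace + A.trace - (S.mulVec x + b + A.mulVec x) ⬝ᵥ (S.mulVec x + b + A.mulVec x)
        ≤ -c₁ * (V x + 1 / 2 * (x ⬝ᵥ A.mulVec x)) + c₂ := by
  intro x
  have hpd : (S + A).PosDef := hS.add hA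
  have hpos : 0 < lmin := by
    obtain ⟨i, hi⟩ := hlmin.1
    rw [← hi]
    exact hpd.eigenvalues_pos i
  have hlo : ∀ i, lmin ≤ hSA.eigenvalues i := fun i => hlmin.2 ⟨i, rfl⟩
  have hhi : ∀ i, hSA.eigenvalues i ≤ lmax := fun i => hlmax.2 ⟨i, rfl⟩
  have key := quad_bound (S + A) hSA lmin lmax hpos hlo hhi b x
  have hM1 : (S + A) *ᵥ x = S *ᵥ x + A *ᵥ x := add_mulVec S A x
  have hM2 : x ⬝ᵥ (S + A) *ᵥ x = x ⬝ᵥ S *ᵥ x + x ⬝ᵥ A *ᵥ x := by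
    rw [hM1, dotProduct_add]
  have hv : S *ᵥ x + b + A *ᵥ x = (S + A) *ᵥ x + b := by rw [hM1]; abel
  rw [hV, hc₁, hc₂]
  rw [show S.mulVec x + b + A.mulVec x = (S + A) *ᵥ x + b from hv]
  rw [hM2] at key
  nlinarith [key]
end

section
/- Let ψ : [0,∞) → ℝ be Lipschitz with constant L = ‖ψ̇‖_∞, and let e : [0,∞) → ℝ^d be absolutely continuous with (1/2)(d/dt)‖e(t)‖² ≤ −L‖e(t)‖ whenever ψ(t) − ‖e(t)‖ ≤ ε and ‖e(t)‖ > 0. If ‖e(0)‖ < ψ(0) − ε for some ε ∈ (0, inf_t ψ(t)/2), then ‖e(t)‖ ≤ ψ(t) − ε for all t ≥ 0. -/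
/-- Funnel invariance (Step 2c of Theorem 1): if `(1/2) d/dt ‖e(t)‖² ≤ -L‖e(t)‖`
whenever the error is `ε`-close to the funnel boundary `ψ`, and the error starts
strictly inside the shifted funnel, it remains inside for all time. -/
theorem funnel_invariance (d : ℕ) (ψ : ℝ → ℝ) (L : NNReal)
    (hLip : LipschitzWith L ψ)
    (e : ℝ → EuclideanSpace ℝ (Fin d)) (g : ℝ → ℝ)
    (he : Continuous e)
    (hderiv : ∀ t : ℝ, 0 ≤ t → HasDerivAt (fun s => ‖e s‖ ^ 2) (g t) t)
    (ε : ℝ) (hε : 0 < ε)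
    (hεinf : ε < (⨅ t : {t : ℝ // 0 ≤ t}, ψ t.1) / 2)
    (hdecay : ∀ t : ℝ, 0 ≤ t → ψ t - ‖e t‖ ≤ ε → 0 < ‖e t‖ →
      1 / 2 * g t ≤ -(L : ℝ) * ‖e t‖)
    (h0 : ‖e 0‖ < ψ 0 - ε) :
    ∀ t : ℝ, 0 ≤ t → ‖e t‖ ≤ ψ t - ε := by
  intro t₁ ht₁
  by_contra hcon
  push_neg at hcon
  -- ψ lower bound
  have hψlb : ∀ s : ℝ, 0 ≤ s → 2 * ε < ψ s := by
    intro s hs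
    by_cases hb : BddBelow (Set.range fun t : {t : ℝ // 0 ≤ t} => ψ t.1)
    · have h1 : (⨅ t : {t : ℝ // 0 ≤ t}, ψ t.1) ≤ ψ s := ciInf_le hb ⟨s, hs⟩
      linarith
    · rw [Real.iInf_of_not_bddBelow hb] at hεinf
      linarith
  set S : Set ℝ := Set.Icc 0 t₁ ∩ {s | ‖e s‖ ≤ ψ s - ε} with hSdef
  have hS0 : (0 : ℝ) ∈ S := ⟨⟨le_refl 0, ht₁⟩, h0.le⟩
  have hSbdd : BddAbove S := ⟨t₁, fun s hs => hs.1.2⟩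
  have hSclosed : IsClosed S :=
    IsClosed.inter isClosed_Icc
      (isClosed_le he.norm ((hLip.continuous.sub continuous_const)))
  set t₀ : ℝ := sSup S with ht₀def
  have ht₀S : t₀ ∈ S := hSclosed.csSup_mem ⟨0, hS0⟩ hSbdd
  have ht₀0 : 0 ≤ t₀ := ht₀S.1.1
  have ht₀le : t₀ ≤ t₁ := ht₀S.1.2
  have ht₀e : ‖e t₀‖ ≤ ψ t₀ - ε := ht₀S.2
  have ht₀lt : t₀ < t₁ := by
    rcases lt_or_eq_of_le ht₀le with h | h
    · exact h
    · exfalso; rw [h] at ht₀e; linarith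
  have hout : ∀ s : ℝ, t₀ < s → s ≤ t₁ → ψ s - ε < ‖e s‖ := by
    intro s hs hs'
    by_contra h
    push_neg at h
    have hmem : s ∈ S := ⟨⟨le_trans ht₀0 hs.le, hs'⟩, h⟩
    have := le_csSup hSbdd hmem
    linarith
  -- the auxiliary function
  set u : ℝ → ℝ := fun s => ‖e s‖ + (L : ℝ) * s with hudef
  have hderiv_u : ∀ x ∈ Set.Ioo t₀ t₁,
      HasDerivAt u (g x / (2 * ‖e x‖) + (L : ℝ)) x := by
    intro x hx
    have hx0 : 0 ≤ x := le_trans ht₀0 hx.1.le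
    have hbig : ψ x - ε < ‖e x‖ := hout x hx.1 hx.2.le
    have hpos : 0 < ‖e x‖ := by have := hψlb x hx0; linarith
    have hne2 : ‖e x‖ ^ 2 ≠ 0 := pow_ne_zero _ (ne_of_gt hpos)
    have hsqrt := (hderiv x hx0).sqrt hne2
    have heq : (fun s => Real.sqrt (‖e s‖ ^ 2)) = fun s => ‖e s‖ :=
      funext fun s => Real.sqrt_sq (norm_nonneg _)
    rw [heq, Real.sqrt_sq (norm_nonneg _)] at hsqrt
    have hlin : HasDerivAt (fun s : ℝ => (L : ℝ) * s) ((L : ℝ) * 1) x :=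
      (hasDerivAt_id x).const_mul (L : ℝ)
    have := hsqrt.add hlin
    rw [mul_one] at this
    exact this
  have hdle : ∀ x ∈ Set.Ioo t₀ t₁, g x / (2 * ‖e x‖) + (L : ℝ) ≤ 0 := by
    intro x hx
    have hx0 : 0 ≤ x := le_trans ht₀0 hx.1.le
    have hbig : ψ x - ε < ‖e x‖ := hout x hx.1 hx.2.le
    have hpos : 0 < ‖e x‖ := by have := hψlb x hx0; linarith
    have hdec := hdecay x hx0 (by linarith) hpos
    have h2 : 0 < 2 * ‖e x‖ := by linarith
    rw [← sub_nonpos, ← sub_neg_eq_add] at *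
    have : g x / (2 * ‖e x‖) ≤ -(L : ℝ) := by
      rw [div_le_iff₀ h2]
      nlinarith
    linarith
  have hanti : AntitoneOn u (Set.Icc t₀ t₁) := by
    apply antitoneOn_of_deriv_nonpos (convex_Icc t₀ t₁)
    · exact (he.norm.add (continuous_const.mul continuous_id)).continuousOn
    · intro x hx
      rw [interior_Icc] at hx
      exact (hderiv_u x hx).differentiableAt.differentiableWithinAt
    · intro x hx
      rw [interior_Icc] at hx
      rw [(hderiv_u x hx).deriv]
      exact hdle x hx
  have hmono := hanti (Set.left_mem_Icc.2 ht₀le) (Set.right_mem_Icc.2 ht₀le) ht₀le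
  have hLipb : ψ t₀ - ψ t₁ ≤ (L : ℝ) * (t₁ - t₀) := by
    have := hLip.dist_le_mul t₀ t₁
    rw [Real.dist_eq, Real.dist_eq] at this
    have h1 : ψ t₀ - ψ t₁ ≤ |ψ t₀ - ψ t₁| := le_abs_self _
    have h2 : |t₀ - t₁| = t₁ - t₀ := by
      rw [abs_sub_comm]; exact abs_of_nonneg (by linarith)
    rw [h2] at this
    linarith
  simp only [hudef] at hmono
  linarith
end
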